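/- arXiv:2508.14473 — 2 statements merged into one kernel-verified Lean document; each statement's English description precedes it below -/
import Mathlib

section
/- Let (W,S) be a Coxeter system, J ⊆ S spherical (i.e. W_J finite), and let w be the unique maximal length element of a double coset W_J w' W_J. Set K = { s ∈ J : w s w⁻¹ ∈ W_J }. Then in fact K = { s ∈ J : w s w⁻¹ ∈ J }, i.e. for every s ∈ K, the element w s w⁻¹ is itself a simple reflection in J. -/
/-!
Tits' sign cocycle `invIndicator x t ∈ ZMod 2`, obtained by lifting to `W` the action
`(t, e) ↦ (s t s, e + [t = s])` of the simple reflections, detects right inversions. Hence `ℓ x`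
is the number of right inversions `N(x)`, and `N(g x) = x⁻¹ (N(g) ∆ N(x⁻¹)) x`. If `w` is maximal
in `W_J w W_J`, every reflection of `W_J` is a left inversion of `w`, whereas all inversions of
`x ∈ W_J` lie in `W_J`; so `ℓ(x w) = ℓ(w) - ℓ(x)`. For `v = w s w⁻¹ ∈ W_J` with `s ∈ J` this
gives `ℓ(v) = ℓ(w) - ℓ(w s) = 1`, and an element of `W_J` of length one is a simple reflection
of `J`, because by the deletion condition `W_J` has reduced words with letters in `J`.
-/

variable {B W : Type*} [Group W] {M : CoxeterMatrix B}

theorem conj_eq_iff_eq_inv_conj {G : Type*} [Group G] (g t a : G) :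
    g * t * g⁻¹ = a ↔ t = g⁻¹ * a * g := by
  constructor <;> rintro rfl <;> group

namespace CoxeterSystem

open scoped Classical

variable (cs : CoxeterSystem M W)

local prefix:100 "s " => cs.simple
local prefix:100 "π " => cs.wordProd
local prefix:100 "ℓ " => cs.length
local prefix:100 "ris " => cs.rightInvSeq

/-- Tits' action of `s i` on pairs (reflection, sign), from his proof of the exchange condition. -/
noncomputable def reflPerm (i : B) : Equiv.Perm (W × ZMod 2) :=
  Function.Involutive.toPerm (fun p => (s i * p.1 * s i, p.2 + if p.1 = s i then 1 else 0)) <| by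
    rintro ⟨t, e⟩
    have hconj : s i * t * s i = s i ↔ t = s i := by
      constructor
      · intro h
        simpa [mul_assoc] using congrArg (fun u => s i * u * s i) h
      · rintro rfl
        simp
    ext
    · simp [mul_assoc]
    · simp only [hconj, add_assoc]
      split_ifs <;> decide +revert

theorem reflPerm_apply (i : B) (t : W) (e : ZMod 2) :
    cs.reflPerm i (t, e) = (s i * t * s i, e + if t = s i then 1 else 0) := rfl

theorem reflPerm_mul_pow_apply (i i' : B) (k : ℕ) (t : W) (e : ZMod 2) :
    ((cs.reflPerm i * cs.reflPerm i') ^ k) (t, e) =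
      ((s i * s i') ^ k * t * ((s i * s i') ^ k)⁻¹,
        e + ∑ n ∈ Finset.range (2 * k), if t = (s i' * s i) ^ n * s i' then 1 else 0) := by
  induction k generalizing t e with
  | zero => simp
  | succ k ih =>
    have hr : s i * (s i' * t * s i') * s i = (s i * s i') * t * (s i * s i')⁻¹ := by
      simp [mul_assoc]
    have hshift (n : ℕ) : (s i * s i')⁻¹ * ((s i' * s i) ^ n * s i') * (s i * s i') =
        (s i' * s i) ^ (n + 2) * s i' := by
      rw [show n + 2 = 1 + n + 1 by ring, pow_succ, pow_add, pow_one]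
      simp [mul_assoc]
    rw [pow_succ, Equiv.Perm.mul_apply, Equiv.Perm.mul_apply, reflPerm_apply, reflPerm_apply, hr,
      ih, mul_add, Finset.sum_range_succ', Finset.sum_range_succ']
    have hfirst : s i' * t * s i' = s i ↔ t = (s i' * s i) ^ (0 + 1) * s i' := by
      simpa [mul_assoc] using conj_eq_iff_eq_inv_conj (s i') t (s i)
    simp only [conj_eq_iff_eq_inv_conj, hshift, hfirst, pow_zero, one_mul]
    ext
    · simp only [pow_succ, mul_inv_rev, mul_assoc]
    · ring

theorem isLiftable_reflPerm : M.IsLiftable cs.reflPerm := by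
  intro i i'
  ext ⟨t, e⟩ : 1
  have hperiod : ∀ n, (s i' * s i) ^ (M i i' + n) = (s i' * s i) ^ n := by
    simp [pow_add]
  -- the summand has period `M i i'`, so the sum over `2 * M i i'` terms counts everything twice
  rw [reflPerm_mul_pow_apply, two_mul, Finset.sum_range_add]
  simp only [hperiod, cs.simple_mul_simple_pow, one_mul, inv_one, mul_one, Equiv.Perm.one_apply]
  rw [CharTwo.add_self_eq_zero, add_zero]

noncomputable def reflRep : W →* Equiv.Perm (W × ZMod 2) :=
  cs.lift ⟨cs.reflPerm, cs.isLiftable_reflPerm⟩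

/-- The sign that `reflRep x` attaches to `t`; it is `1` exactly when `t` is a right inversion of
`x` (see `isRightInversion_iff_invIndicator`). -/
noncomputable def invIndicator (x t : W) : ZMod 2 := (cs.reflRep x (t, 0)).2

theorem reflRep_apply (x t : W) (e : ZMod 2) :
    cs.reflRep x (t, e) = (x * t * x⁻¹, e + cs.invIndicator x t) := by
  induction x using cs.simple_induction_left generalizing t e with
  | one => simp [invIndicator]
  | mul_simple_left x i ih =>
    have hstep (e : ZMod 2) : cs.reflRep (s i * x) (t, e) =
        cs.reflPerm i (x * t * x⁻¹, e + cs.invIndicator x t) := by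
      rw [map_mul, Equiv.Perm.mul_apply, ih, reflRep, cs.lift_apply_simple]
    rw [invIndicator, hstep, hstep, reflPerm_apply, reflPerm_apply]
    simp [mul_assoc, add_assoc]

theorem invIndicator_mul (x y t : W) :
    cs.invIndicator (x * y) t = cs.invIndicator y t + cs.invIndicator x (y * t * y⁻¹) := by
  rw [invIndicator, map_mul, Equiv.Perm.mul_apply, reflRep_apply, reflRep_apply, zero_add]

theorem invIndicator_simple (i : B) (t : W) :
    cs.invIndicator (s i) t = if t = s i then 1 else 0 := by
  simp [invIndicator, reflRep, cs.lift_apply_simple, reflPerm_apply]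

theorem invIndicator_one (t : W) : cs.invIndicator 1 t = 0 := by
  simp [invIndicator]

theorem invIndicator_inv_conj (x t : W) :
    cs.invIndicator x⁻¹ (x * t * x⁻¹) = cs.invIndicator x t := by
  have h := cs.invIndicator_mul x⁻¹ x t
  rw [inv_mul_cancel, invIndicator_one, eq_comm, CharTwo.add_eq_zero] at h
  exact h.symm

theorem invIndicator_wordProd (ω : List B) (t : W) :
    cs.invIndicator (π ω) t = (ris ω).count t := by
  induction ω with
  | nil => simp [invIndicator_one]
  | cons i ω ih =>
    rw [wordProd_cons, invIndicator_mul, ih, invIndicator_simple, rightInvSeq, List.count_cons,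
      conj_eq_iff_eq_inv_conj]
    simp only [beq_iff_eq, @eq_comm _ _ t]
    push_cast
    rfl

theorem invIndicator_self {t : W} (ht : cs.IsReflection t) : cs.invIndicator t t = 1 := by
  obtain ⟨u, i, rfl⟩ := ht
  have h1 : u⁻¹ * (u * s i * u⁻¹) * u⁻¹⁻¹ = s i := by group
  have h2 : s i * s i * (s i)⁻¹ = s i := by simp
  rw [invIndicator_mul, invIndicator_inv_conj, h1, invIndicator_mul, h2, invIndicator_simple,
    if_pos rfl, add_left_comm, CharTwo.add_self_eq_zero, add_zero]

theorem mem_rightInvSeq_of_invIndicator_eq_one {ω : List B} {t : W}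
    (h : cs.invIndicator (π ω) t = 1) : t ∈ ris ω := by
  rw [invIndicator_wordProd] at h
  by_contra hmem
  rw [List.count_eq_zero_of_not_mem hmem, Nat.cast_zero] at h
  exact zero_ne_one h

theorem isRightInversion_of_invIndicator_eq_one {x t : W} (h : cs.invIndicator x t = 1) :
    cs.IsRightInversion x t := by
  obtain ⟨ω, hω, rfl⟩ := cs.exists_isReduced x
  exact cs.isRightInversion_of_mem_rightInvSeq hω (cs.mem_rightInvSeq_of_invIndicator_eq_one h)

theorem isRightInversion_iff_invIndicator {x t : W} (ht : cs.IsReflection t) :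
    cs.IsRightInversion x t ↔ cs.invIndicator x t = 1 := by
  refine ⟨fun hx => ?_, cs.isRightInversion_of_invIndicator_eq_one⟩
  by_contra h
  have h0 : cs.invIndicator x t = 0 := by
    generalize cs.invIndicator x t = a at h
    decide +revert
  have hxt : cs.invIndicator (x * t) t = 1 := by
    rw [invIndicator_mul, invIndicator_self cs ht, mul_inv_cancel_right, h0, add_zero]
  exact ht.isRightInversion_mul_left_iff.mp (cs.isRightInversion_of_invIndicator_eq_one hxt) hx

theorem isRightInversion_wordProd_iff {ω : List B} (hω : cs.IsReduced ω) {t : W} :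
    cs.IsRightInversion (π ω) t ↔ t ∈ ris ω :=
  ⟨fun h => cs.mem_rightInvSeq_of_invIndicator_eq_one
    ((cs.isRightInversion_iff_invIndicator h.1).mp h), cs.isRightInversion_of_mem_rightInvSeq hω⟩

def rightInvSet (x : W) : Set W := {t | cs.IsRightInversion x t}

theorem rightInvSet_wordProd {ω : List B} (hω : cs.IsReduced ω) :
    cs.rightInvSet (π ω) = (ris ω).toFinset := by
  ext t
  simp [rightInvSet, cs.isRightInversion_wordProd_iff hω]

theorem finite_rightInvSet (x : W) : (cs.rightInvSet x).Finite := by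
  obtain ⟨ω, hω, rfl⟩ := cs.exists_isReduced x
  rw [cs.rightInvSet_wordProd hω]
  exact Finset.finite_toSet _

theorem ncard_rightInvSet (x : W) : (cs.rightInvSet x).ncard = ℓ x := by
  obtain ⟨ω, hω, rfl⟩ := cs.exists_isReduced x
  rw [cs.rightInvSet_wordProd hω, Set.ncard_coe_finset,
    List.toFinset_card_of_nodup hω.nodup_rightInvSeq, length_rightInvSeq, hω]

theorem rightInvSet_mul (g x : W) :
    cs.rightInvSet (g * x) =
      (fun t => x * t * x⁻¹) ⁻¹' symmDiff (cs.rightInvSet g) (cs.rightInvSet x⁻¹) := by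
  ext t
  simp only [rightInvSet, Set.mem_preimage, Set.mem_symmDiff, Set.mem_ofPred_eq]
  by_cases ht : cs.IsReflection t
  · have ht' : cs.IsReflection (x * t * x⁻¹) := ht.conj x
    rw [cs.isRightInversion_iff_invIndicator ht, cs.isRightInversion_iff_invIndicator ht',
      cs.isRightInversion_iff_invIndicator ht', invIndicator_mul, invIndicator_inv_conj]
    generalize cs.invIndicator x t = a
    generalize cs.invIndicator g (x * t * x⁻¹) = b
    decide +revert
  · have ht' : ¬ cs.IsReflection (x * t * x⁻¹) := by rwa [isReflection_conj_iff]
    simp [IsRightInversion, ht, ht']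

theorem length_mul_add_length_of_rightInvSet_subset {g x : W}
    (h : cs.rightInvSet x⁻¹ ⊆ cs.rightInvSet g) : ℓ (g * x) + ℓ x = ℓ g := by
  have hconj : Function.Bijective fun t => x * t * x⁻¹ := (MulAut.conj x).bijective
  rw [← ncard_rightInvSet, rightInvSet_mul, Set.ncard_preimage_of_injective_subset_range hconj.1
    (by simp [hconj.2.range_eq]), symmDiff_of_ge h, ← cs.length_inv x, ← ncard_rightInvSet,
    ← ncard_rightInvSet, Set.ncard_sdiff_add_ncard_of_subset h (cs.finite_rightInvSet g)]

theorem exists_isReduced_sublist (ω : List B) :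
    ∃ ω' : List B, ω'.Sublist ω ∧ cs.IsReduced ω' ∧ π ω' = π ω := by
  induction ω using List.reverseRecOn with
  | nil => exact ⟨[], List.Sublist.refl _, by simp [IsReduced], rfl⟩
  | append_singleton ω i ih =>
    obtain ⟨ω', hsub, hred, hprod⟩ := ih
    have hprod' : π (ω' ++ [i]) = π (ω ++ [i]) := by simp [wordProd_append, hprod]
    by_cases hred' : cs.IsReduced (ω' ++ [i])
    · exact ⟨ω' ++ [i], hsub.append (List.Sublist.refl _), hred', hprod'⟩
    -- otherwise `s i` is a right inversion of `π ω'`, and multiplying by it deletes a letter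
    have hlen' : ℓ (π ω' * s i) + 1 = ω'.length := by
      have hne : ℓ (π ω' * s i) ≠ ω'.length + 1 := by
        simpa [IsReduced, wordProd_append] using hred'
      rcases cs.length_mul_simple (π ω') i with h | h <;> rw [hred.eq] at h <;> omega
    have hdesc : ℓ (π ω' * s i) < ℓ (π ω') := by rw [hred.eq]; omega
    have hmem : s i ∈ ris ω' :=
      (cs.isRightInversion_wordProd_iff hred).mp ⟨cs.isReflection_simple i, hdesc⟩
    obtain ⟨k, hk, hki⟩ := List.mem_iff_getElem.mp hmem
    rw [length_rightInvSeq] at hk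
    have herase : π ω' * s i = π (ω'.eraseIdx k) := by
      rw [← hki, ← List.getD_eq_getElem _ 1, wordProd_mul_getD_rightInvSeq]
    refine ⟨ω'.eraseIdx k, ((List.eraseIdx_sublist ω' k).trans hsub).trans
      (List.sublist_append_left ω [i]), ?_, by rw [← herase, ← hprod', wordProd_append]; simp⟩
    rw [IsReduced, ← herase]
    have := List.length_eraseIdx_add_one hk
    omega

section Parabolic

variable (J : Set B)

theorem exists_wordProd_eq_of_mem_closure {x : W} (hx : x ∈ Subgroup.closure (cs.simple '' J)) :
    ∃ ω : List B, (∀ i ∈ ω, i ∈ J) ∧ π ω = x := by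
  induction hx using Subgroup.closure_induction with
  | mem x hx =>
    obtain ⟨i, hi, rfl⟩ := hx
    exact ⟨[i], by simpa using hi, cs.wordProd_singleton i⟩
  | one => exact ⟨[], by simp, cs.wordProd_nil⟩
  | mul x y _ _ hx hy =>
    obtain ⟨ω₁, h₁, rfl⟩ := hx
    obtain ⟨ω₂, h₂, rfl⟩ := hy
    exact ⟨ω₁ ++ ω₂, by simpa [or_imp, forall_and] using ⟨h₁, h₂⟩, (cs.wordProd_append ω₁ ω₂)⟩
  | inv x _ hx =>
    obtain ⟨ω, h, rfl⟩ := hx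
    exact ⟨ω.reverse, by simpa using h, cs.wordProd_reverse ω⟩

theorem exists_isReduced_of_mem_closure {x : W} (hx : x ∈ Subgroup.closure (cs.simple '' J)) :
    ∃ ω : List B, (∀ i ∈ ω, i ∈ J) ∧ cs.IsReduced ω ∧ π ω = x := by
  obtain ⟨ω, hJ, rfl⟩ := cs.exists_wordProd_eq_of_mem_closure J hx
  obtain ⟨ω', hsub, hred, hprod⟩ := cs.exists_isReduced_sublist ω
  exact ⟨ω', fun i hi => hJ i (hsub.subset hi), hred, hprod⟩

theorem exists_mem_eq_simple_of_length_eq_one {x : W}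
    (hx : x ∈ Subgroup.closure (cs.simple '' J)) (h : ℓ x = 1) : ∃ j ∈ J, x = s j := by
  obtain ⟨ω, hJ, hred, rfl⟩ := cs.exists_isReduced_of_mem_closure J hx
  obtain ⟨j, rfl⟩ := List.length_eq_one_iff.mp (hred.eq.symm.trans h)
  exact ⟨j, hJ j (List.mem_singleton_self j), cs.wordProd_singleton j⟩

theorem mem_closure_of_invIndicator_eq_one {x t : W} (hx : x ∈ Subgroup.closure (cs.simple '' J))
    (h : cs.invIndicator x t = 1) : t ∈ Subgroup.closure (cs.simple '' J) := by
  induction hx using Subgroup.closure_induction generalizing t with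
  | mem x hx =>
    obtain ⟨i, hi, rfl⟩ := hx
    rw [invIndicator_simple] at h
    split_ifs at h with hti
    · exact hti ▸ Subgroup.subset_closure ⟨i, hi, rfl⟩
    · exact absurd h zero_ne_one
  | one => exact absurd ((invIndicator_one cs t).symm.trans h) zero_ne_one
  | mul x y _ hy ihx ihy =>
    rw [invIndicator_mul] at h
    have h' : cs.invIndicator y t = 1 ∨ cs.invIndicator x (y * t * y⁻¹) = 1 := by
      revert h
      generalize cs.invIndicator y t = a
      generalize cs.invIndicator x (y * t * y⁻¹) = b
      decide +revert
    rcases h' with h | h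
    · exact ihy h
    · simpa [mul_assoc] using mul_mem (mul_mem (inv_mem hy) (ihx h)) hy
  | inv x hx ih =>
    have hconj : x⁻¹ * t * x ∈ Subgroup.closure (cs.simple '' J) := by
      apply ih
      rwa [← invIndicator_inv_conj, mul_assoc, mul_assoc, mul_inv_cancel, mul_one,
        mul_inv_cancel_left]
    simpa [mul_assoc] using mul_mem (mul_mem hx hconj) (inv_mem hx)

theorem rightInvSet_subset_closure {x : W} (hx : x ∈ Subgroup.closure (cs.simple '' J)) :
    cs.rightInvSet x ⊆ Subgroup.closure (cs.simple '' J) := fun _ ht =>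
  cs.mem_closure_of_invIndicator_eq_one J hx ((cs.isRightInversion_iff_invIndicator ht.1).mp ht)

theorem length_mul_add_length_of_forall_isLeftInversion {w x : W}
    (hw : ∀ t ∈ Subgroup.closure (cs.simple '' J), cs.IsReflection t → cs.IsLeftInversion w t)
    (hx : x ∈ Subgroup.closure (cs.simple '' J)) : ℓ (x * w) + ℓ x = ℓ w := by
  have hsub : cs.rightInvSet x⁻¹⁻¹ ⊆ cs.rightInvSet w⁻¹ := by
    rw [inv_inv]
    exact fun t ht => cs.isRightInversion_inv_iff.mpr
      (hw t (cs.rightInvSet_subset_closure J hx ht) ht.1)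
  have h := cs.length_mul_add_length_of_rightInvSet_subset hsub
  rwa [← mul_inv_rev, cs.length_inv, cs.length_inv, cs.length_inv] at h

end Parabolic

end CoxeterSystem

theorem stmt8_general (cs : CoxeterSystem M W) (J : Set B)
    (w : W)
    (hmax : ∀ u, (∃ x ∈ Subgroup.closure (cs.simple '' J),
        ∃ y ∈ Subgroup.closure (cs.simple '' J), u = x * w * y) →
      cs.length u ≤ cs.length w ∧ (cs.length u = cs.length w → u = w)) :
    {j | j ∈ J ∧ w * cs.simple j * w⁻¹ ∈ Subgroup.closure (cs.simple '' J)}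
      = {j | j ∈ J ∧ ∃ j' ∈ J, w * cs.simple j * w⁻¹ = cs.simple j'} := by
  ext j
  constructor
  · rintro ⟨hj, hv⟩
    have hleft : ∀ t ∈ Subgroup.closure (cs.simple '' J), cs.IsReflection t →
        cs.IsLeftInversion w t := fun t ht htr =>
      ⟨htr, lt_of_le_of_ne (hmax _ ⟨t, ht, 1, one_mem _, by group⟩).1 (htr.length_mul_right_ne w)⟩
    have hdesc : cs.length (w * cs.simple j) + 1 = cs.length w := by
      have hle := (hmax (w * cs.simple j) ⟨1, one_mem _, cs.simple j,
        Subgroup.subset_closure ⟨j, hj, rfl⟩, by group⟩).1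
      rcases cs.length_mul_simple w j with h | h <;> omega
    have hlen := cs.length_mul_add_length_of_forall_isLeftInversion J hleft hv
    rw [show w * cs.simple j * w⁻¹ * w = w * cs.simple j by group] at hlen
    exact ⟨hj, cs.exists_mem_eq_simple_of_length_eq_one J hv (by omega)⟩
  · rintro ⟨hj, j', hj', h⟩
    exact ⟨hj, h ▸ Subgroup.subset_closure ⟨j', hj', rfl⟩⟩

/-- if `J` is spherical and `w` is the unique maximal length element of its
double coset `W_J w W_J`, then `{s ∈ J : wsw⁻¹ ∈ W_J} = {s ∈ J : wsw⁻¹ ∈ J}`. -/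
theorem stmt8 (cs : CoxeterSystem M W) (J : Set B)
    (hsph : Finite (Subgroup.closure (cs.simple '' J)))
    (w : W)
    (hmax : ∀ u, (∃ x ∈ Subgroup.closure (cs.simple '' J),
        ∃ y ∈ Subgroup.closure (cs.simple '' J), u = x * w * y) →
      cs.length u ≤ cs.length w ∧ (cs.length u = cs.length w → u = w)) :
    {j | j ∈ J ∧ w * cs.simple j * w⁻¹ ∈ Subgroup.closure (cs.simple '' J)}
      = {j | j ∈ J ∧ ∃ j' ∈ J, w * cs.simple j * w⁻¹ = cs.simple j'} :=
  stmt8_general cs J w hmax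
end

section
/- Let ℋ be the generic Hecke algebra of a Coxeter system (W,S), J ⊆ S, and let x = Σ_{w∈W} x_w T_w ∈ ℋ (finitely supported). Then x commutes with T_s for all s ∈ J (equivalently, x lies in the centralizer of the parabolic subalgebra ℋ_J) if and only if the coefficients satisfy: (i) x_w = x_{w'} whenever w ≈_J w' (w and w' are in the same J-cyclic-shift class, i.e. related by a length-preserving chain of conjugations by elements of J); and (ii) x_{sws} = b_s x_w − a_s x_{sw} whenever s ∈ J and ℓ(sws) < ℓ(w) (writing w' = sws, so w →^s w' strictly decreases length by 2). -/
/-!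
In the basis `T_w`, the coefficient of `T_u` in `T_s x` is `x_{su} + a_s x_u` when `ℓ(su) < ℓ(u)`
and `b_s x_{su}` otherwise, and symmetrically for `x T_s`. Comparing the two at `u = sw` or
`u = ws` yields (i) and (ii); conversely, each of the four cases according to whether `s` is a left
and/or right descent of `u` is settled by (i) or (ii). The only Coxeter-theoretic input is that if
`s` is both a left and a right descent of `w`, then `sw = ws` or `ℓ(sws) < ℓ(w)`. This follows from
the exchange condition, which comes from Tits' parity representation of `W` on `W × ZMod 2`.
-/

variable {B W : Type*} [Group W] {M : CoxeterMatrix B}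
variable {R : Type*} [CommRing R] {H : Type*} [Ring H] [Algebra R H]

def cyclicShiftStep (cs : CoxeterSystem M W) (J : Set B) (u u' : W) : Prop :=
  ∃ i ∈ J, u' = cs.simple i * u * cs.simple i ∧ cs.length u' ≤ cs.length u

/-- `w ≈_J w'`: a length-preserving chain of cyclic-shift steps with generators in `J`. -/
def cyclicShiftEquiv (cs : CoxeterSystem M W) (J : Set B) (w w' : W) : Prop :=
  Relation.ReflTransGen (cyclicShiftStep cs J) w w' ∧ cs.length w = cs.length w'

namespace CoxeterSystem

variable (cs : CoxeterSystem M W)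

local prefix:100 "s" => cs.simple
local prefix:100 "ℓ" => cs.length
local prefix:100 "π" => cs.wordProd
local prefix:100 "lis " => cs.leftInvSeq

theorem prod_map_alternatingWord_two_mul {G : Type*} [Monoid G] (f : B → G) (i j : B) (p : ℕ) :
    ((alternatingWord i j (2 * p)).map f).prod = (f i * f j) ^ p := by
  induction p with
  | zero => simp [alternatingWord]
  | succ p ih =>
    rw [show 2 * (p + 1) = 2 * p + 1 + 1 by ring, alternatingWord_succ, alternatingWord_succ]
    simp [ih, pow_succ]

theorem even_count_leftInvSeq_alternatingWord [DecidableEq W] (i j : B) (t : W) :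
    Even ((lis (alternatingWord i j (2 * M i j))).count t) := by
  set L := lis (alternatingWord i j (2 * M i j))
  have hlen : L.length = 2 * M i j := by simp [L]
  have hperiodic : L.drop (M i j) = L.take (M i j) := by
    refine List.ext_getElem (by simp [hlen]; omega) fun k hk _ => ?_
    simp only [List.getElem_drop, List.getElem_take, L]
    rw [getElem_leftInvSeq_alternatingWord cs i j _ _ (by simp at hk; omega),
      getElem_leftInvSeq_alternatingWord cs i j _ _ (by simp at hk; omega),
      prod_alternatingWord_eq_mul_pow, prod_alternatingWord_eq_mul_pow]
    have hodd (n : ℕ) : ¬ Even (2 * n + 1) ∧ (2 * n + 1) / 2 = n :=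
      ⟨by simp [parity_simps], by omega⟩
    simp only [(hodd _).1, (hodd _).2, if_false, pow_add, simple_mul_simple_pow', one_mul]
  rw [← L.take_append_drop (M i j), List.count_append, hperiodic]
  exact ⟨_, rfl⟩

theorem simple_mul_mul_simple_eq_simple_iff (i : B) (t : W) : s i * t * s i = s i ↔ t = s i := by
  constructor
  · intro h
    simpa [mul_assoc] using congrArg (fun y => s i * y * s i) h
  · rintro rfl
    simp

section ParityRepresentation

variable [DecidableEq W]

-- Tits' construction: `s i` conjugates `t` and flips the sign exactly when `t = s i`. Along a word
-- `ω` the sign then records the parity of the number of occurrences of `t` in `lis ω`.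
def simplePerm (i : B) : Equiv.Perm (W × ZMod 2) :=
  Function.Involutive.toPerm (fun p => (s i * p.1 * s i, p.2 + if p.1 = s i then 1 else 0)) <| by
    rintro ⟨t, z⟩
    have hconj : s i * (s i * t * s i) * s i = t := by simp [mul_assoc]
    simp only [hconj, simple_mul_mul_simple_eq_simple_iff, add_assoc, CharTwo.add_self_eq_zero,
      add_zero]

theorem simplePerm_apply (i : B) (t : W) (z : ZMod 2) :
    cs.simplePerm i (t, z) = (s i * t * s i, z + if t = s i then 1 else 0) := rfl

@[simp]
theorem simplePerm_inv (i : B) : (cs.simplePerm i)⁻¹ = cs.simplePerm i :=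
  Function.Involutive.toPerm_symm _

theorem count_leftInvSeq_cons (i : B) (ω : List B) (t : W) :
    (lis (i :: ω)).count t = (lis ω).count (s i * t * s i) + if t = s i then 1 else 0 := by
  have hmap : ((lis ω).map (MulAut.conj (s i))).count t = (lis ω).count (s i * t * s i) := by
    have ht : t = MulAut.conj (s i) (s i * t * s i) := by simp [mul_assoc]
    conv_lhs => rw [ht]
    exact List.count_map_of_injective _ _ (MulAut.conj (s i)).injective _
  rw [leftInvSeq, List.count_cons, hmap]
  simp [@eq_comm _ (s i) t]

theorem prod_map_simplePerm_inv_apply (ω : List B) (t : W) (z : ZMod 2) :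
    ((ω.map cs.simplePerm).prod)⁻¹ (t, z) = ((π ω)⁻¹ * t * π ω, z + (lis ω).count t) := by
  induction ω generalizing t z with
  | nil => simp
  | cons i ω ih =>
    rw [List.map_cons, List.prod_cons, mul_inv_rev, simplePerm_inv, Equiv.Perm.mul_apply,
      simplePerm_apply, ih, count_leftInvSeq_cons, wordProd_cons]
    push_cast
    simp only [mul_inv_rev, inv_simple, mul_assoc, Prod.mk.injEq, true_and]
    ring

theorem isLiftable_simplePerm : M.IsLiftable cs.simplePerm := by
  intro i j
  rw [← prod_map_alternatingWord_two_mul, ← inv_eq_one]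
  ext1 ⟨t, z⟩
  simp [prod_map_simplePerm_inv_apply, prod_alternatingWord_eq_mul_pow,
    (cs.even_count_leftInvSeq_alternatingWord i j t).natCast_zmod_two]

def parityRep : W →* Equiv.Perm (W × ZMod 2) :=
  cs.lift ⟨cs.simplePerm, cs.isLiftable_simplePerm⟩

theorem parityRep_wordProd (ω : List B) : cs.parityRep (π ω) = (ω.map cs.simplePerm).prod := by
  rw [wordProd, map_list_prod, List.map_map]
  congr 2
  funext i
  exact cs.lift_apply_simple cs.isLiftable_simplePerm i

theorem count_leftInvSeq_eq_of_wordProd_eq {ω ω' : List B} (h : π ω = π ω') (t : W) :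
    ((lis ω).count t : ZMod 2) = (lis ω').count t := by
  have := congrArg (fun φ => ((cs.parityRep φ)⁻¹ (t, 0)).2) h
  simpa [parityRep_wordProd, prod_map_simplePerm_inv_apply] using this

end ParityRepresentation

theorem simple_mem_leftInvSeq_of_isLeftDescent {ω : List B} {i : B}
    (h : cs.IsLeftDescent (π ω) i) : s i ∈ lis ω := by
  classical
  obtain ⟨ω', hω', hprod⟩ := cs.exists_isReduced (s i * π ω)
  have hcons : π (i :: ω') = π ω := by rw [wordProd_cons, ← hprod, simple_mul_simple_cancel_left]
  have hcons_reduced : cs.IsReduced (i :: ω') := by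
    rw [IsReduced, hcons, List.length_cons, ← hω'.eq, ← hprod, (cs.isLeftDescent_iff).mp h]
  have hcount : (lis (i :: ω')).count (s i) = 1 :=
    List.count_eq_one_of_mem hcons_reduced.nodup_leftInvSeq List.mem_cons_self
  -- `s i` occurs exactly once in `lis (i :: ω')`, hence an odd number of times in `lis ω`
  have hparity := cs.count_leftInvSeq_eq_of_wordProd_eq hcons.symm (s i)
  rw [hcount, Nat.cast_one] at hparity
  refine List.count_pos_iff.mp (Nat.pos_of_ne_zero fun h0 => ?_)
  simp [h0] at hparity

theorem exists_eraseIdx_of_isLeftDescent {ω : List B} {i : B}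
    (h : cs.IsLeftDescent (π ω) i) : ∃ k < ω.length, s i * π ω = π (ω.eraseIdx k) := by
  obtain ⟨k, hk, hget⟩ := List.mem_iff_getElem.mp (cs.simple_mem_leftInvSeq_of_isLeftDescent h)
  rw [length_leftInvSeq] at hk
  refine ⟨k, hk, ?_⟩
  rw [← getD_leftInvSeq_mul_wordProd, List.getD_eq_getElem _ 1 (by simpa using hk), hget]

theorem commute_or_length_simple_mul_mul_simple_lt {w : W} {i : B} (hl : cs.IsLeftDescent w i)
    (hr : cs.IsRightDescent w i) : Commute (s i) w ∨ ℓ (s i * w * s i) < ℓ w := by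
  obtain ⟨ω, hω, hprod⟩ := cs.exists_isReduced (w * s i)
  have hw : w = π (ω ++ [i]) := by
    rw [wordProd_append, ← hprod, wordProd_singleton, simple_mul_simple_cancel_right]
  have hlen : ω.length + 1 = ℓ w := by rw [← hω.eq, ← hprod, (cs.isRightDescent_iff).mp hr]
  obtain ⟨k, hk, hk'⟩ := cs.exists_eraseIdx_of_isLeftDescent (hw ▸ hl)
  rw [← hw] at hk'
  rcases lt_or_ge k ω.length with hlt | hge
  · right
    rw [List.eraseIdx_append_of_lt_length hlt, wordProd_append, wordProd_singleton] at hk'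
    calc ℓ (s i * w * s i) = ℓ (π (ω.eraseIdx k)) := by rw [hk', simple_mul_simple_cancel_right]
      _ ≤ (ω.eraseIdx k).length := cs.length_wordProd_le _
      _ < ℓ w := by rw [List.length_eraseIdx_of_lt hlt]; omega
  · left
    rw [List.eraseIdx_append_of_length_le hge, show k - ω.length = 0 by simp at hk; omega] at hk'
    simpa [Commute, SemiconjBy, hprod] using hk'

end CoxeterSystem

noncomputable def opInvBasis (bas : Module.Basis W R H) : Module.Basis W R Hᵐᵒᵖ :=
  (bas.map (MulOpposite.opLinearEquiv R)).reindex (Equiv.inv W)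

@[simp]
theorem opInvBasis_apply (bas : Module.Basis W R H) (w : W) :
    opInvBasis bas w = MulOpposite.op (bas w⁻¹) := by
  simp [opInvBasis]

@[simp]
theorem opInvBasis_repr_op (bas : Module.Basis W R H) (y : H) (w : W) :
    (opInvBasis bas).repr (MulOpposite.op y) w = bas.repr y w⁻¹ := by
  rw [opInvBasis, Module.Basis.repr_reindex_apply]
  simp

structure HeckeRelations (cs : CoxeterSystem M W) (T : W → H) (a b : B → R) : Prop where
  mul_of_length_add : ∀ v w, cs.length (v * w) = cs.length v + cs.length w → T v * T w = T (v * w)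
  simple_mul_self : ∀ i, T (cs.simple i) * T (cs.simple i) = a i • T (cs.simple i) + b i • 1

namespace HeckeRelations

variable {cs : CoxeterSystem M W} {T : W → H} {a b : B → R}

local prefix:100 "s" => cs.simple
local prefix:100 "ℓ" => cs.length

theorem simple_mul_of_not_isLeftDescent (hT : HeckeRelations cs T a b) {w : W} {i : B}
    (h : ¬ cs.IsLeftDescent w i) : T (s i) * T w = T (s i * w) :=
  hT.mul_of_length_add _ _ <| by rw [cs.length_simple, cs.not_isLeftDescent_iff.mp h, add_comm]

theorem simple_mul_of_isLeftDescent (hT : HeckeRelations cs T a b) {w : W} {i : B}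
    (h : cs.IsLeftDescent w i) : T (s i) * T w = a i • T w + b i • T (s i * w) := by
  have hw : T (s i) * T (s i * w) = T w := by
    rw [hT.simple_mul_of_not_isLeftDescent, cs.simple_mul_simple_cancel_left]
    rwa [← cs.isLeftDescent_iff_not_isLeftDescent_mul]
  rw [← hw, ← mul_assoc, hT.simple_mul_self, add_mul, smul_mul_assoc, smul_mul_assoc, one_mul]

variable {bas : Module.Basis W R H}

theorem repr_simple_mul_of_isLeftDescent (hT : HeckeRelations cs bas a b) {u : W} {i : B}
    (hu : cs.IsLeftDescent u i) (x : H) :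
    bas.repr (bas (s i) * x) u = bas.repr x (s i * u) + a i * bas.repr x u := by
  classical
  have h := LinearMap.congr_fun (bas.ext
    (f₁ := Finsupp.lapply u ∘ₗ bas.repr.toLinearMap ∘ₗ LinearMap.mulLeft R (bas (s i)))
    (f₂ := (Finsupp.lapply (s i * u) + a i • Finsupp.lapply u) ∘ₗ bas.repr.toLinearMap)
    fun w => ?_) x
  · simpa using h
  have hdesc := cs.isLeftDescent_iff_not_isLeftDescent_mul (w := u) (i := i)
  have hmove : s i * w = u ↔ w = s i * u := by constructor <;> rintro rfl <;> simp
  by_cases hw : cs.IsLeftDescent w i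
  · have hne : w ≠ s i * u := by rintro rfl; exact hdesc.mp hu hw
    simp [hT.simple_mul_of_isLeftDescent hw, Finsupp.single_apply, hmove, hne]
  · have hne : w ≠ u := by rintro rfl; exact hw hu
    simp [hT.simple_mul_of_not_isLeftDescent hw, Finsupp.single_apply, hmove, hne]

theorem repr_simple_mul_of_not_isLeftDescent (hT : HeckeRelations cs bas a b) {u : W} {i : B}
    (hu : ¬ cs.IsLeftDescent u i) (x : H) :
    bas.repr (bas (s i) * x) u = b i * bas.repr x (s i * u) := by
  classical
  have h := LinearMap.congr_fun (bas.ext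
    (f₁ := Finsupp.lapply u ∘ₗ bas.repr.toLinearMap ∘ₗ LinearMap.mulLeft R (bas (s i)))
    (f₂ := b i • Finsupp.lapply (s i * u) ∘ₗ bas.repr.toLinearMap)
    fun w => ?_) x
  · simpa using h
  have hdesc := cs.isLeftDescent_iff_not_isLeftDescent_mul (w := u) (i := i)
  have hmove : s i * w = u ↔ w = s i * u := by constructor <;> rintro rfl <;> simp
  by_cases hw : cs.IsLeftDescent w i
  · have hne : w ≠ u := by rintro rfl; exact hu hw
    simp [hT.simple_mul_of_isLeftDescent hw, Finsupp.single_apply, hmove, hne]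
  · rw [hdesc, not_not] at hu
    have hne : w ≠ s i * u := by rintro rfl; exact hw hu
    simp [hT.simple_mul_of_not_isLeftDescent hw, hmove, hne]

theorem opInvBasis (hT : HeckeRelations cs bas a b) : HeckeRelations cs (opInvBasis bas) a b where
  mul_of_length_add v w h := by
    simp only [opInvBasis_apply, ← MulOpposite.op_mul, mul_inv_rev]
    rw [hT.mul_of_length_add]
    rw [← mul_inv_rev, cs.length_inv, cs.length_inv, cs.length_inv, h, add_comm]
  simple_mul_self i := by
    simp only [opInvBasis_apply, cs.inv_simple, ← MulOpposite.op_mul, hT.simple_mul_self,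
      MulOpposite.op_add, MulOpposite.op_smul, MulOpposite.op_one]

theorem repr_mul_simple_of_isRightDescent (hT : HeckeRelations cs bas a b) {u : W} {i : B}
    (hu : cs.IsRightDescent u i) (x : H) :
    bas.repr (x * bas (s i)) u = bas.repr x (u * s i) + a i * bas.repr x u := by
  have h := hT.opInvBasis.repr_simple_mul_of_isLeftDescent (cs.isLeftDescent_inv_iff.mpr hu)
    (MulOpposite.op x)
  simpa [← MulOpposite.op_mul, mul_inv_rev] using h

theorem repr_mul_simple_of_not_isRightDescent (hT : HeckeRelations cs bas a b) {u : W} {i : B}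
    (hu : ¬ cs.IsRightDescent u i) (x : H) :
    bas.repr (x * bas (s i)) u = b i * bas.repr x (u * s i) := by
  have h := hT.opInvBasis.repr_simple_mul_of_not_isLeftDescent
    (mt cs.isLeftDescent_inv_iff.mp hu) (MulOpposite.op x)
  simpa [← MulOpposite.op_mul, mul_inv_rev] using h

theorem repr_eq_repr_conj_of_commute (hT : HeckeRelations cs bas a b) {i : B} {x : H}
    (hx : Commute (bas (s i)) x) {w : W} (hw : ℓ (s i * w * s i) = ℓ w) :
    bas.repr x w = bas.repr x (s i * w * s i) := by
  have hsw := cs.length_simple_mul w i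
  have hws := cs.length_mul_simple w i
  by_cases hl : cs.IsLeftDescent w i
  · by_cases hr : cs.IsRightDescent w i
    · rcases cs.commute_or_length_simple_mul_mul_simple_lt hl hr with hcomm | hlt
      · rw [hcomm.eq, mul_assoc, cs.simple_mul_simple_self, mul_one]
      · omega
    have hc := congrArg (fun y => bas.repr y (w * s i)) hx.eq
    rw [cs.not_isRightDescent_iff] at hr
    rw [hT.repr_simple_mul_of_isLeftDescent
        (by rw [CoxeterSystem.IsLeftDescent, ← mul_assoc]; omega),
      hT.repr_mul_simple_of_isRightDescent (by simp [CoxeterSystem.IsRightDescent]; omega),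
      ← mul_assoc, cs.simple_mul_simple_cancel_right] at hc
    exact (add_right_cancel hc).symm
  · have hc := congrArg (fun y => bas.repr y (s i * w)) hx.eq
    rw [cs.not_isLeftDescent_iff] at hl
    rw [hT.repr_simple_mul_of_isLeftDescent (by simp [CoxeterSystem.IsLeftDescent]; omega),
      hT.repr_mul_simple_of_isRightDescent (by rw [CoxeterSystem.IsRightDescent]; omega),
      cs.simple_mul_simple_cancel_left] at hc
    exact add_right_cancel hc

theorem repr_conj_of_commute (hT : HeckeRelations cs bas a b) {i : B} {x : H}
    (hx : Commute (bas (s i)) x) {w : W} (hw : ℓ (s i * w * s i) < ℓ w) :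
    bas.repr x (s i * w * s i) = b i * bas.repr x w - a i * bas.repr x (s i * w) := by
  have hsw := cs.length_simple_mul w i
  have hsws := cs.length_mul_simple (s i * w) i
  have hc := congrArg (fun y => bas.repr y (s i * w)) hx.eq
  rw [hT.repr_simple_mul_of_not_isLeftDescent (by simp [cs.not_isLeftDescent_iff]; omega),
    hT.repr_mul_simple_of_isRightDescent (by rw [CoxeterSystem.IsRightDescent]; omega),
    cs.simple_mul_simple_cancel_left] at hc
  exact eq_sub_of_add_eq hc.symm

theorem commute_of_repr (hT : HeckeRelations cs bas a b) {i : B} {x : H}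
    (hconj : ∀ w, ℓ (s i * w * s i) = ℓ w → bas.repr x w = bas.repr x (s i * w * s i))
    (hdesc : ∀ w, ℓ (s i * w * s i) < ℓ w →
      bas.repr x (s i * w * s i) = b i * bas.repr x w - a i * bas.repr x (s i * w)) :
    Commute (bas (s i)) x := by
  refine bas.repr.injective (Finsupp.ext fun u => ?_)
  have hsus := cs.length_mul_simple (s i * u) i
  have hsus' := cs.length_simple_mul (u * s i) i
  rw [← mul_assoc] at hsus'
  have hswap := hconj (s i * u)
  rw [cs.simple_mul_simple_cancel_left] at hswap
  rcases cs.length_simple_mul u i with hsu | hsu <;> rcases cs.length_mul_simple u i with hus | hus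
  · rw [hT.repr_simple_mul_of_not_isLeftDescent (cs.not_isLeftDescent_iff.mpr hsu),
      hT.repr_mul_simple_of_not_isRightDescent (cs.not_isRightDescent_iff.mpr hus),
      hswap (by omega)]
  · have h := hdesc (s i * u) (by rw [cs.simple_mul_simple_cancel_left]; omega)
    rw [cs.simple_mul_simple_cancel_left] at h
    rw [hT.repr_simple_mul_of_not_isLeftDescent (cs.not_isLeftDescent_iff.mpr hsu),
      hT.repr_mul_simple_of_isRightDescent (cs.isRightDescent_iff.mpr hus), h, sub_add_cancel]
  · have h := hdesc (u * s i) (by rw [← mul_assoc, cs.simple_mul_simple_cancel_right]; omega)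
    rw [← mul_assoc, cs.simple_mul_simple_cancel_right, ← hconj u (by omega)] at h
    rw [hT.repr_simple_mul_of_isLeftDescent (cs.isLeftDescent_iff.mpr hsu),
      hT.repr_mul_simple_of_not_isRightDescent (cs.not_isRightDescent_iff.mpr hus), h,
      sub_add_cancel]
  · rw [hT.repr_simple_mul_of_isLeftDescent (cs.isLeftDescent_iff.mpr hsu),
      hT.repr_mul_simple_of_isRightDescent (cs.isRightDescent_iff.mpr hus), hswap (by omega)]

end HeckeRelations

theorem apply_eq_of_cyclicShiftEquiv {α : Type*} (cs : CoxeterSystem M W) (J : Set B) (f : W → α)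
    (hf : ∀ i ∈ J, ∀ w, cs.length (cs.simple i * w * cs.simple i) = cs.length w →
      f w = f (cs.simple i * w * cs.simple i))
    {w w' : W} (h : cyclicShiftEquiv cs J w w') : f w = f w' := by
  obtain ⟨hchain, hlen⟩ := h
  -- lengths never increase along the chain, so every step of a length-preserving chain preserves it
  suffices ∀ v, Relation.ReflTransGen (cyclicShiftStep cs J) w v →
      cs.length v ≤ cs.length w ∧ (cs.length v = cs.length w → f w = f v) from
    (this w' hchain).2 hlen.symm
  intro v hv
  induction hv with
  | refl => exact ⟨le_rfl, fun _ => rfl⟩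
  | tail _ hstep ih =>
    obtain ⟨i, hi, rfl, hle⟩ := hstep
    refine ⟨hle.trans ih.1, fun heq => ?_⟩
    have hlen' := le_antisymm ih.1 (heq ▸ hle)
    exact (ih.2 hlen').trans (hf i hi _ (heq.trans hlen'.symm))

theorem stmt17_general (cs : CoxeterSystem M W) (J : Set B)
    (T : W → H) (bas : Module.Basis W R H) (hbas : ∀ w, bas w = T w)
    (a b : B → R)
    (hmul : ∀ v w : W, cs.length (v * w) = cs.length v + cs.length w →
      T v * T w = T (v * w))
    (hsq : ∀ i, T (cs.simple i) * T (cs.simple i)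
      = a i • T (cs.simple i) + b i • (1 : H))
    (x : H) :
    (∀ i ∈ J, T (cs.simple i) * x = x * T (cs.simple i)) ↔
      ((∀ w w' : W, cyclicShiftEquiv cs J w w' → bas.repr x w = bas.repr x w') ∧
        (∀ i ∈ J, ∀ w : W, cs.length (cs.simple i * w * cs.simple i) < cs.length w →
          bas.repr x (cs.simple i * w * cs.simple i)
            = b i * bas.repr x w - a i * bas.repr x (cs.simple i * w))) := by
  obtain rfl : ⇑bas = T := funext hbas
  have hT : HeckeRelations cs bas a b := ⟨hmul, hsq⟩
  constructor
  · intro hx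
    exact ⟨fun w w' => apply_eq_of_cyclicShiftEquiv cs J _
        fun i hi w => hT.repr_eq_repr_conj_of_commute (hx i hi),
      fun i hi w => hT.repr_conj_of_commute (hx i hi)⟩
  · rintro ⟨hequiv, hdesc⟩ i hi
    exact hT.commute_of_repr (fun w hw => hequiv _ _ ⟨.single ⟨i, hi, rfl, hw.le⟩, hw.symm⟩)
      (hdesc i hi)

/-- an element `x = Σ x_w T_w` of the generic Hecke algebra commutes with
all `T_s`, `s ∈ J` (equivalently lies in the centralizer of `ℋ_J`) iff
(i) `x_w = x_{w'}` whenever `w ≈_J w'`, and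
(ii) `x_{sws} = b_s x_w − a_s x_{sw}` whenever `s ∈ J` and `ℓ(sws) < ℓ(w)`. -/
theorem stmt17 (cs : CoxeterSystem M W) (J : Set B)
    (T : W → H) (bas : Module.Basis W R H) (hbas : ∀ w, bas w = T w)
    (a b : B → R)
    (hpar : ∀ i j, IsConj (cs.simple i) (cs.simple j) → a i = a j ∧ b i = b j)
    (hone : T 1 = 1)
    (hmul : ∀ v w : W, cs.length (v * w) = cs.length v + cs.length w →
      T v * T w = T (v * w))
    (hsq : ∀ i, T (cs.simple i) * T (cs.simple i)
      = a i • T (cs.simple i) + b i • (1 : H))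
    (x : H) :
    (∀ i ∈ J, T (cs.simple i) * x = x * T (cs.simple i)) ↔
      ((∀ w w' : W, cyclicShiftEquiv cs J w w' → bas.repr x w = bas.repr x w') ∧
        (∀ i ∈ J, ∀ w : W, cs.length (cs.simple i * w * cs.simple i) < cs.length w →
          bas.repr x (cs.simple i * w * cs.simple i)
            = b i * bas.repr x w - a i * bas.repr x (cs.simple i * w))) :=
  stmt17_general cs J T bas hbas a b hmul hsq x
end
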